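/- Define F(n,k) = (-1)^k (4k+1) ((1/2)_k)^2 (-n)_k · n! / ((k!)^2 (3/2+n)_k · (3/2)_n) and G(n,k) = F(n,k) · (-2k^2)/((n-k+1)(4k+1)) for 0 ≤ k ≤ n. Then F(n+1,k) - F(n,k) = G(n,k+1) - G(n,k) for all applicable n, k. -/
import Mathlib


/-- The rising factorial (Pochhammer symbol) `(a)_k = a(a+1)⋯(a+k-1)` over `ℚ`. -/
noncomputable def rise (a : ℚ) (k : ℕ) : ℚ := Polynomial.eval a (ascPochhammer ℚ k)

lemma rise_succ (a : ℚ) (k : ℕ) : rise a (k+1) = rise a k * (a + k) := by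
  simp [rise, ascPochhammer_succ_right]

lemma rise_succ_left (a : ℚ) (k : ℕ) : rise a (k+1) = a * rise (a+1) k := by
  simp [rise, ascPochhammer_succ_left, Polynomial.eval_comp]

lemma rise_pos (a : ℚ) (k : ℕ) (h : 0 < a) : 0 < rise a k := ascPochhammer_pos k a h


/-- The WZ summand for the terminating Ramanujan series (zero outside `0 ≤ k ≤ n`). -/
noncomputable def Fwz (n k : ℕ) : ℚ :=
  if k ≤ n then
    (-1 : ℚ) ^ k * (4 * k + 1) * (rise (1 / 2) k) ^ 2 * rise (-n) k * n.factorial /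
      ((k.factorial : ℚ) ^ 2 * rise (3 / 2 + n) k * rise (3 / 2) n)
  else 0

/-- The WZ mate `G(n,k) = F(n,k)·(-2k²)/((n-k+1)(4k+1))` for `0 ≤ k ≤ n`. -/
noncomputable def Gwz (n k : ℕ) : ℚ :=
  if k ≤ n then Fwz n k * (-2 * k ^ 2) / (((n : ℚ) - k + 1) * (4 * k + 1)) else 0

set_option maxHeartbeats 1000000 in
theorem wz_pair_ramanujan (n k : ℕ) (h : k + 1 ≤ n) :
    Fwz (n + 1) k - Fwz n k = Gwz n (k + 1) - Gwz n k := by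
  have hkn : k ≤ n := Nat.le_of_succ_le h
  have hkn1 : k ≤ n + 1 := le_trans hkn (Nat.le_succ n)
  have hxa : (k : ℚ) + 1 ≤ (n : ℚ) := by exact_mod_cast h
  -- nonzero facts
  have h32a : (3/2 : ℚ) + (n:ℚ) ≠ 0 := by positivity
  have h32ax : (3/2 : ℚ) + (n:ℚ) + (k:ℚ) ≠ 0 := by positivity
  have hfk : ((k.factorial : ℚ)) ≠ 0 := by exact_mod_cast k.factorial_ne_zero
  have hR : rise (3/2 + (n:ℚ)) k ≠ 0 := ne_of_gt (rise_pos _ _ (by positivity))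
  have hS : rise (3/2) n ≠ 0 := ne_of_gt (rise_pos _ _ (by norm_num))
  have hax : (n:ℚ) - (k:ℚ) ≠ 0 := by nlinarith
  have hax1 : (n:ℚ) - (k:ℚ) + 1 ≠ 0 := by nlinarith
  have ha1x : (n:ℚ) + 1 - (k:ℚ) ≠ 0 := by nlinarith
  have h4x1 : 4*(k:ℚ) + 1 ≠ 0 := by positivity
  have h4x5 : 4*((k:ℚ)+1) + 1 ≠ 0 := by positivity
  have hx1 : (k:ℚ) + 1 ≠ 0 := by positivity
  -- shifted pochhammer values
  have e5 : rise (-((n:ℚ)+1)) k = rise (-(n:ℚ)) k * ((n:ℚ)+1) / ((n:ℚ)+1-(k:ℚ)) := by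
    have h1 := rise_succ (-((n:ℚ)+1)) k
    have h2 := rise_succ_left (-((n:ℚ)+1)) k
    rw [show (-((n:ℚ)+1)+1) = -(n:ℚ) by ring] at h2
    have key := h1.symm.trans h2
    rw [eq_div_iff ha1x]
    linear_combination -key
  have e6 : rise (3/2 + ((n:ℚ)+1)) k
      = rise (3/2 + (n:ℚ)) k * (3/2 + (n:ℚ) + (k:ℚ)) / (3/2 + (n:ℚ)) := by
    have h1 := rise_succ (3/2 + (n:ℚ)) k
    have h2 := rise_succ_left (3/2 + (n:ℚ)) k
    rw [show ((3/2:ℚ) + (n:ℚ) + 1) = 3/2 + ((n:ℚ)+1) by ring] at h2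
    have key := h1.symm.trans h2
    rw [eq_div_iff h32a]
    linear_combination -key
  have hRn1 : rise (3/2 + ((n:ℚ)+1)) k ≠ 0 := ne_of_gt (rise_pos _ _ (by positivity))
  have hD1 : (((n:ℚ)+1-(k:ℚ)) * (k.factorial:ℚ)^2 * rise (3/2 + (n:ℚ)) k * (3/2+(n:ℚ)+(k:ℚ)) * rise (3/2) n) ≠ 0 :=
    mul_ne_zero (mul_ne_zero (mul_ne_zero (mul_ne_zero ha1x (pow_ne_zero _ hfk)) hR) h32ax) hS
  -- the four terms as explicit fractions
  have hF1 : Fwz (n+1) k =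
      ((-1:ℚ)^k * (4*(k:ℚ)+1) * (rise (1/2) k)^2 * rise (-(n:ℚ)) k * ((n:ℚ)+1)^2 * n.factorial) /
      (((n:ℚ)+1-(k:ℚ)) * (k.factorial:ℚ)^2 * rise (3/2 + (n:ℚ)) k * (3/2+(n:ℚ)+(k:ℚ)) * rise (3/2) n) := by
    rw [Fwz, if_pos hkn1, Nat.factorial_succ, rise_succ (3/2 : ℚ) n]
    push_cast
    rw [div_eq_div_iff
      (mul_ne_zero (mul_ne_zero (pow_ne_zero _ hfk) hRn1) (mul_ne_zero hS h32a)) hD1,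
      e5, e6]
    field_simp
  have hF2 : Fwz n k =
      ((-1:ℚ)^k * (4*(k:ℚ)+1) * (rise (1/2) k)^2 * rise (-(n:ℚ)) k * n.factorial) /
      ((k.factorial:ℚ)^2 * rise (3/2 + (n:ℚ)) k * rise (3/2) n) := by
    rw [Fwz, if_pos hkn]
  have hDF3 : ((((k:ℚ)+1) * k.factorial)^2 * (rise (3/2 + (n:ℚ)) k * (3/2+(n:ℚ)+(k:ℚ))) * rise (3/2) n) ≠ 0 :=
    mul_ne_zero (mul_ne_zero (pow_ne_zero _ (mul_ne_zero hx1 hfk)) (mul_ne_zero hR h32ax)) hS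
  have hF3 : Fwz n (k+1) =
      ((-1:ℚ)^k * (-1) * (4*((k:ℚ)+1)+1) * (rise (1/2) k * (1/2+(k:ℚ)))^2 *
        (rise (-(n:ℚ)) k * (-(n:ℚ)+(k:ℚ))) * n.factorial) /
      ((((k:ℚ)+1) * k.factorial)^2 * (rise (3/2 + (n:ℚ)) k * (3/2+(n:ℚ)+(k:ℚ))) * rise (3/2) n) := by
    rw [Fwz, if_pos h, Nat.factorial_succ,
      rise_succ (1/2 : ℚ) k, rise_succ (-(n:ℚ)) k, rise_succ (3/2 + (n:ℚ)) k]
    push_cast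
    rw [pow_succ]
  have hG3 : Gwz n (k+1) =
      ((-1:ℚ)^k * (-1) * (4*((k:ℚ)+1)+1) * (rise (1/2) k * (1/2+(k:ℚ)))^2 *
        (rise (-(n:ℚ)) k * (-(n:ℚ)+(k:ℚ))) * n.factorial * (-2*((k:ℚ)+1)^2)) /
      ((((k:ℚ)+1) * k.factorial)^2 * (rise (3/2 + (n:ℚ)) k * (3/2+(n:ℚ)+(k:ℚ))) * rise (3/2) n *
        (((n:ℚ)-((k:ℚ)+1)+1) * (4*((k:ℚ)+1)+1))) := by
    rw [Gwz, if_pos h, hF3, div_mul_eq_mul_div, div_div]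
    push_cast
    rfl
  have hG4 : Gwz n k =
      ((-1:ℚ)^k * (4*(k:ℚ)+1) * (rise (1/2) k)^2 * rise (-(n:ℚ)) k * n.factorial * (-2*(k:ℚ)^2)) /
      ((k.factorial:ℚ)^2 * rise (3/2 + (n:ℚ)) k * rise (3/2) n * (((n:ℚ)-(k:ℚ)+1) * (4*(k:ℚ)+1))) := by
    rw [Gwz, if_pos hkn, hF2, div_mul_eq_mul_div, div_div]
  rw [hF1, hF2, hG3, hG4]
  have hD2 : ((k.factorial:ℚ)^2 * rise (3/2 + (n:ℚ)) k * rise (3/2) n) ≠ 0 := by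
    exact mul_ne_zero (mul_ne_zero (pow_ne_zero _ hfk) hR) hS
  have hD3 : ((((k:ℚ)+1) * k.factorial)^2 * (rise (3/2 + (n:ℚ)) k * (3/2+(n:ℚ)+(k:ℚ))) * rise (3/2) n *
      (((n:ℚ)-((k:ℚ)+1)+1) * (4*((k:ℚ)+1)+1))) ≠ 0 := by
    exact mul_ne_zero (mul_ne_zero (mul_ne_zero (pow_ne_zero _ (mul_ne_zero hx1 hfk))
      (mul_ne_zero hR h32ax)) hS) (mul_ne_zero (by nlinarith) h4x5)
  have hD4 : ((k.factorial:ℚ)^2 * rise (3/2 + (n:ℚ)) k * rise (3/2) n * (((n:ℚ)-(k:ℚ)+1) * (4*(k:ℚ)+1))) ≠ 0 :=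
    mul_ne_zero hD2 (mul_ne_zero hax1 h4x1)
  rw [div_sub_div _ _ hD1 hD2, div_sub_div _ _ hD3 hD4,
    div_eq_div_iff (mul_ne_zero hD1 hD2) (mul_ne_zero hD3 hD4)]
  ring
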